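/- arXiv:math/0606152 — 3 statements merged into one kernel-verified Lean document; each statement's English description precedes it below -/
import Mathlib

section
/- Let p > 3 be a prime with p ≡ 3 (mod 4). Then ∏_{j=1}^{p-1} [j]_{q^j} ≡ -1 (mod [p]_q) in ℤ[q]. -/
open Polynomial Finset

section Key

variable {K : Type*} [Field K]

lemma q_wilson_key (p : ℕ) (hp : p.Prime) (hp3 : 3 < p) (hpmod : p % 4 = 3)
    {ζ : K} (hζ : IsPrimitiveRoot ζ p) :
    ∏ j ∈ Finset.Icc 1 (p - 1), ∑ i ∈ Finset.range j, ζ ^ (j * i) = -1 := by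
  haveI : Fact p.Prime := ⟨hp⟩
  have hζp : ζ ^ p = 1 := hζ.pow_eq_one
  have hpow : ∀ n : ℕ, ζ ^ n = ζ ^ (n % p) := by
    intro n
    conv_lhs => rw [← Nat.mod_add_div n p, pow_add, pow_mul, hζp, one_pow, mul_one]
  -- rewrite each factor as a quotient
  have hfac : ∀ j ∈ Finset.Icc 1 (p - 1),
      ∑ i ∈ Finset.range j, ζ ^ (j * i) = (ζ ^ (j * j) - 1) / (ζ ^ j - 1) := by
    intro j hj
    simp only [Finset.mem_Icc] at hj
    have hne : ζ ^ j ≠ 1 := hζ.pow_ne_one_of_pos_of_lt (by omega) (by omega)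
    calc ∑ i ∈ Finset.range j, ζ ^ (j * i) = ∑ i ∈ Finset.range j, (ζ ^ j) ^ i := by
          simp [pow_mul]
      _ = ((ζ ^ j) ^ j - 1) / (ζ ^ j - 1) := geom_sum_eq hne j
      _ = (ζ ^ (j * j) - 1) / (ζ ^ j - 1) := by rw [← pow_mul]
  rw [Finset.prod_congr rfl hfac, Finset.prod_div_distrib]
  -- reindex over ZMod p
  set s : Finset (ZMod p) := Finset.univ \ {0} with hs
  have hmem_s : ∀ b : ZMod p, b ∈ s ↔ b ≠ 0 := by
    intro b; simp [hs]
  have hval_mem : ∀ b ∈ s, b.val ∈ Finset.Icc 1 (p - 1) := by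
    intro b hb
    have h0 : b ≠ 0 := (hmem_s b).mp hb
    have h1 : b.val ≠ 0 := fun h => h0 ((ZMod.val_eq_zero b).mp h)
    have h2 : b.val < p := ZMod.val_lt b
    simp only [Finset.mem_Icc]; omega
  have hcast_mem : ∀ j ∈ Finset.Icc 1 (p - 1), ((j : ZMod p)) ∈ s := by
    intro j hj
    simp only [Finset.mem_Icc] at hj
    rw [hmem_s]
    intro h
    have := ZMod.val_cast_of_lt (show j < p by omega)
    rw [h, ZMod.val_zero] at this
    omega
  have hval_cast : ∀ j ∈ Finset.Icc 1 (p - 1), ((j : ZMod p)).val = j := by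
    intro j hj
    simp only [Finset.mem_Icc] at hj
    exact ZMod.val_cast_of_lt (by omega)
  have hD : ∏ j ∈ Finset.Icc 1 (p - 1), (ζ ^ j - 1) = ∏ b ∈ s, (ζ ^ b.val - 1) := by
    refine Finset.prod_nbij' (fun j => (j : ZMod p)) (fun b => b.val) hcast_mem hval_mem
      hval_cast (fun b hb => ZMod.natCast_zmod_val b)
      (fun j hj => by rw [hval_cast j hj])
  have hN : ∏ j ∈ Finset.Icc 1 (p - 1), (ζ ^ (j * j) - 1)
      = ∏ b ∈ s, (ζ ^ ((b ^ 2).val) - 1) := by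
    refine Finset.prod_nbij' (fun j => (j : ZMod p)) (fun b => b.val) hcast_mem hval_mem
      hval_cast (fun b hb => ZMod.natCast_zmod_val b)
      (fun j hj => ?_)
    have : ((j : ZMod p) ^ 2).val = (j * j) % p := by
      rw [show ((j : ZMod p) ^ 2) = ((j * j : ℕ) : ZMod p) by push_cast; ring,
        ZMod.val_natCast]
    rw [this, ← hpow]
  rw [hD, hN]
  set T : Finset (ZMod p) := s.image (fun a => a ^ 2) with hT
  have h2ne : (2 : ZMod p) ≠ 0 := by
    have : ((2 : ℕ) : ZMod p) ≠ 0 := by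
      rw [Ne, ZMod.natCast_eq_zero_iff]
      intro h
      have := Nat.le_of_dvd (by norm_num) h
      omega
    simpa using this
  have hneg_ne : ∀ c : ZMod p, c ≠ 0 → c ≠ -c := by
    intro c hc h
    have : (2 : ZMod p) * c = 0 := by rw [two_mul]; rw [eq_neg_iff_add_eq_zero] at h; exact h
    rcases mul_eq_zero.mp this with h' | h'
    · exact h2ne h'
    · exact hc h'
  have hfiber : ∀ b ∈ T, ({a ∈ s | a ^ 2 = b} : Finset (ZMod p)).card = 2 := by
    intro b hb
    obtain ⟨c, hc, rfl⟩ := Finset.mem_image.mp hb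
    have hc0 : c ≠ 0 := (hmem_s c).mp hc
    have hset : ({a ∈ s | a ^ 2 = c ^ 2} : Finset (ZMod p)) = {c, -c} := by
      ext a
      simp only [Finset.mem_filter, Finset.mem_insert, Finset.mem_singleton,
        sq_eq_sq_iff_eq_or_eq_neg, hmem_s]
      constructor
      · rintro ⟨-, h⟩; exact h
      · rintro (rfl | rfl)
        · exact ⟨hc0, Or.inl rfl⟩
        · exact ⟨neg_ne_zero.mpr hc0, Or.inr rfl⟩
    rw [hset, Finset.card_insert_of_notMem (by simpa using hneg_ne c hc0),
      Finset.card_singleton]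
  have hscard : s.card = p - 1 := by
    rw [hs, Finset.card_sdiff_of_subset (by simp), Finset.card_univ, ZMod.card, Finset.card_singleton]
  have hTcard : 2 * T.card = p - 1 := by
    have h1 : s.card = ∑ b ∈ T, ({a ∈ s | a ^ 2 = b} : Finset (ZMod p)).card :=
      Finset.card_eq_sum_card_image (fun a => a ^ 2) s
    rw [Finset.sum_congr rfl hfiber, Finset.sum_const, smul_eq_mul] at h1
    omega
  -- N as a product over T of squares
  have hNsq : ∏ b ∈ s, (ζ ^ ((b ^ 2).val) - 1) = ∏ b ∈ T, (ζ ^ b.val - 1) ^ 2 := by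
    rw [Finset.prod_comp (fun b : ZMod p => ζ ^ b.val - 1) (fun a => a ^ 2)]
    exact Finset.prod_congr rfl fun b hb => by rw [hfiber b hb]
  -- split D over T and -T
  have hTsub : T ⊆ s := by
    intro b hb
    obtain ⟨c, hc, rfl⟩ := Finset.mem_image.mp hb
    rw [hmem_s]
    exact pow_ne_zero 2 ((hmem_s c).mp hc)
  set T' : Finset (ZMod p) := T.image (fun b => -b) with hT'
  have hT'sub : T' ⊆ s := by
    intro b hb
    obtain ⟨c, hc, rfl⟩ := Finset.mem_image.mp hb
    rw [hmem_s]
    exact neg_ne_zero.mpr ((hmem_s c).mp (hTsub hc))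
  have hdisj : Disjoint T T' := by
    rw [Finset.disjoint_left]
    intro b hb hb'
    obtain ⟨c, hc, hbc⟩ := Finset.mem_image.mp hb'
    obtain ⟨d, hd, rfl⟩ := Finset.mem_image.mp hb
    obtain ⟨e, he, rfl⟩ := Finset.mem_image.mp hc
    have he0 : e ≠ 0 := (hmem_s e).mp he
    have hsq : IsSquare (-1 : ZMod p) := by
      refine ⟨d * e⁻¹, ?_⟩
      have h1 : d ^ 2 = -(e ^ 2) := hbc.symm
      have h2 : e ^ 2 ≠ 0 := pow_ne_zero 2 he0
      have : (d * e⁻¹) * (d * e⁻¹) = d ^ 2 * (e ^ 2)⁻¹ := by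
        field_simp
      rw [this, h1, neg_mul, mul_inv_cancel₀ h2]
    rw [ZMod.exists_sq_eq_neg_one_iff] at hsq
    exact hsq hpmod
  have hunion : T ∪ T' = s := by
    apply Finset.eq_of_subset_of_card_le (Finset.union_subset hTsub hT'sub)
    rw [Finset.card_union_of_disjoint hdisj, hT',
      Finset.card_image_of_injective _ neg_injective, hscard]
    omega
  have hDsplit : ∏ b ∈ s, (ζ ^ b.val - 1)
      = (∏ b ∈ T, (ζ ^ b.val - 1)) * ∏ b ∈ T, (ζ ^ ((-b).val) - 1) := by
    rw [← hunion, Finset.prod_union hdisj, hT',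
      Finset.prod_image (fun a _ b _ h => neg_injective h)]
  -- pointwise identity
  have hpt : ∀ b ∈ T, (ζ ^ b.val - 1) ^ 2
      = (-(ζ ^ b.val)) * ((ζ ^ b.val - 1) * (ζ ^ ((-b).val) - 1)) := by
    intro b hb
    have hb0 : b ≠ 0 := (hmem_s b).mp (hTsub hb)
    have hvlt : b.val < p := ZMod.val_lt b
    have hv0 : b.val ≠ 0 := fun h => hb0 ((ZMod.val_eq_zero b).mp h)
    have hnegval : (-b).val = p - b.val := by
      rw [ZMod.neg_val, if_neg hb0]
    have hmul : ζ ^ b.val * ζ ^ ((-b).val) = 1 := by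
      rw [hnegval, ← pow_add, show b.val + (p - b.val) = p by omega, hζp]
    linear_combination (ζ ^ b.val - 1) * hmul
  -- sum of values over T is divisible by p
  have hsum0 : ∑ b ∈ T, b = 0 := by
    have hall : ∑ a : ZMod p, a ^ 2 = 0 := by
      apply FiniteField.sum_pow_lt_card_sub_one
      rw [ZMod.card]; omega
    have hsq : ∑ a ∈ s, a ^ 2 = 0 := by
      rw [hs, Finset.sum_sdiff_eq_sub (by simp)] at *
      simpa using hall
    have hcomp : ∑ a ∈ s, a ^ 2 = ∑ b ∈ T, (2 : ℕ) • b := by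
      rw [Finset.sum_comp (fun b : ZMod p => b) (fun a => a ^ 2)]
      exact Finset.sum_congr rfl fun b hb => by rw [hfiber b hb]
    rw [hcomp] at hsq
    have : (2 : ZMod p) * ∑ b ∈ T, b = 0 := by
      rw [Finset.mul_sum]
      rw [← hsq]
      exact Finset.sum_congr rfl fun b _ => by rw [nsmul_eq_mul]; norm_num
    rcases mul_eq_zero.mp this with h | h
    · exact absurd h h2ne
    · exact h
  have hzsum : ζ ^ (∑ b ∈ T, b.val) = 1 := by
    have hc : ((∑ b ∈ T, b.val : ℕ) : ZMod p) = 0 := by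
      push_cast
      rw [Finset.sum_congr rfl fun b _ => ZMod.natCast_zmod_val b]
      exact hsum0
    obtain ⟨k, hk⟩ := (ZMod.natCast_eq_zero_iff _ p).mp hc
    rw [hk, pow_mul, hζp, one_pow]
  have hTodd : (-1 : K) ^ T.card = -1 := by
    have : Odd T.card := Nat.odd_iff.mpr (by omega)
    exact Odd.neg_one_pow this
  -- put it together
  have hprodneg : ∏ b ∈ T, (-(ζ ^ b.val)) = -1 := by
    calc ∏ b ∈ T, (-(ζ ^ b.val)) = ∏ b ∈ T, ((-1) * ζ ^ b.val) := by
          simp [neg_mul]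
      _ = ((-1 : K) ^ T.card) * ∏ b ∈ T, ζ ^ b.val := by
          rw [Finset.prod_mul_distrib, Finset.prod_const]
      _ = -1 := by
          rw [hTodd, Finset.prod_pow_eq_pow_sum, hzsum, mul_one]
  have hND : ∏ b ∈ s, (ζ ^ ((b ^ 2).val) - 1) = -(∏ b ∈ s, (ζ ^ b.val - 1)) := by
    rw [hNsq, Finset.prod_congr rfl hpt, Finset.prod_mul_distrib, hprodneg,
      Finset.prod_mul_distrib, ← hDsplit, neg_one_mul]
  have hDne : ∏ b ∈ s, (ζ ^ b.val - 1) ≠ 0 := by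
    apply Finset.prod_ne_zero_iff.mpr
    intro b hb
    have h0 : b ≠ 0 := (hmem_s b).mp hb
    have h1 : b.val ≠ 0 := fun h => h0 ((ZMod.val_eq_zero b).mp h)
    exact sub_ne_zero.mpr (hζ.pow_ne_one_of_pos_of_lt (by omega) (ZMod.val_lt b))
  rw [hND, neg_div, div_self hDne]

end Key

/-- **q-analogue of Wilson's theorem for `p ≡ 3 (mod 4)`.** For a prime `p > 3` with
`p ≡ 3 (mod 4)`, the product `∏_{j=1}^{p-1} [j]_{q^j}` is congruent to `-1` modulo
`[p]_q` in `ℤ[q]`, where `[j]_{q^j} = 1 + q^j + q^(2j) + ⋯ + q^((j-1)j)`. -/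
theorem q_wilson_three_mod_four (p : ℕ) (hp : p.Prime) (hp3 : 3 < p) (hpmod : p % 4 = 3) :
    (∑ i ∈ Finset.range p, (X : ℤ[X]) ^ i) ∣
      (∏ j ∈ Finset.Icc 1 (p - 1), ∑ i ∈ Finset.range j, (X : ℤ[X]) ^ (j * i)) + 1 := by
  haveI : Fact p.Prime := ⟨hp⟩
  have hζ : IsPrimitiveRoot (Complex.exp (2 * Real.pi * Complex.I / p)) p :=
    Complex.isPrimitiveRoot_exp p (by omega)
  set ζ : ℂ := Complex.exp (2 * Real.pi * Complex.I / p)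
  rw [show (∑ i ∈ Finset.range p, (X : ℤ[X]) ^ i) = cyclotomic p ℤ from
    (Polynomial.cyclotomic_prime ℤ p).symm]
  have hinj : Function.Injective (algebraMap ℤ ℚ) := fun a b h => by exact_mod_cast h
  rw [← Polynomial.map_dvd_map (algebraMap ℤ ℚ) hinj (cyclotomic.monic p ℤ)]
  rw [Polynomial.map_cyclotomic, Polynomial.cyclotomic_eq_minpoly_rat hζ (by omega)]
  apply minpoly.dvd
  rw [Polynomial.aeval_map_algebraMap]
  simp only [map_add, map_prod, map_sum, map_pow, aeval_X, map_one]
  rw [q_wilson_key p hp hp3 hpmod hζ]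
  ring
end

section
/- Let p > 3 be a prime with p ≡ 3 (mod 4) and ζ = e^{2πi/p}. Then ∏_{j=1}^{p-1} (1-ζ^{j²})/(1-ζ^j) = -1. -/
/-!
Write `g y = 1 - ψ y` for the additive character `ψ y = ζ ^ y` of `𝔽_p` and pick a half system
`H` of `𝔽_p^×`, i.e. `𝔽_p^× = H ⊔ -H`; put `A = ∏_{x ∈ H} g (x²)`. As `(-x)² = x²`, the numerator
is `A²`. As `-1` is not a square, `H² ⊔ -H²` is again a half system, so the denominator is
`∏_{x ∈ H} g (x²) g (-x²)`. Since `g (-y) = -ψ (-y) g y`, this equals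
`(-1)^|H| ψ (-∑_{x ∈ H} x²) A² = -A²`: `|H| = (p - 1)/2` is odd, and
`2 ∑_{x ∈ H} x² = ∑_{x ∈ 𝔽_p} x² = 0` once `p > 3`.
-/

open Finset
open scoped Pointwise

structure IsHalfSystem {G : Type*} [AddGroup G] [Fintype G] [DecidableEq G] (H : Finset G) :
    Prop where
  disjoint_neg : Disjoint H (-H)
  union_neg : H ∪ -H = univ.erase 0

namespace IsHalfSystem

section AddGroup

variable {G : Type*} [AddGroup G] [Fintype G] [DecidableEq G] {H : Finset G}

theorem ne_zero_of_mem (hH : IsHalfSystem H) {x : G} (hx : x ∈ H) : x ≠ 0 :=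
  ne_of_mem_erase (hH.union_neg ▸ mem_union_left _ hx)

theorem prod_erase_zero_eq_prod_mul_neg {M : Type*} [CommMonoid M] (hH : IsHalfSystem H)
    (f : G → M) :
    ∏ x ∈ univ.erase 0, f x = ∏ x ∈ H, f x * f (-x) := by
  rw [← hH.union_neg, prod_union hH.disjoint_neg, prod_neg_index, prod_mul_distrib]

theorem two_mul_card (hH : IsHalfSystem H) : 2 * #H = Fintype.card G - 1 := by
  rw [← card_univ, ← card_erase_of_mem (mem_univ 0), ← hH.union_neg,
    card_union_of_disjoint hH.disjoint_neg, card_neg, two_mul]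

end AddGroup

section Field

variable {F : Type*} [Field F] [Fintype F] [DecidableEq F] {H : Finset F}

theorem injOn_sq (hH : IsHalfSystem H) : Set.InjOn (· ^ 2) (H : Set F) := by
  intro x hx y hy hxy
  rcases sq_eq_sq_iff_eq_or_eq_neg.mp hxy with h | rfl
  · exact h
  · exact absurd (mem_neg'.mpr (by rwa [neg_neg])) (disjoint_left.mp hH.disjoint_neg hx)

theorem image_sq (hH : IsHalfSystem H) (hF : ¬IsSquare (-1 : F)) :
    IsHalfSystem (H.image (· ^ 2)) := by
  have hdisj : Disjoint (H.image (· ^ 2)) (-H.image (· ^ 2)) := by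
    refine disjoint_left.mpr ?_
    simp only [mem_neg', mem_image]
    rintro _ ⟨x, -, rfl⟩ ⟨y, hy, hxy⟩
    exact hF ⟨x / y, by field_simp [hH.ne_zero_of_mem hy]; linear_combination -hxy⟩
  refine ⟨hdisj, eq_of_subset_of_card_le ?_ ?_⟩
  · intro z hz
    rw [mem_erase, and_iff_left (mem_univ z)]
    simp only [mem_union, mem_neg', mem_image] at hz
    rcases hz with ⟨x, hx, rfl⟩ | ⟨x, hx, hxz⟩
    · exact pow_ne_zero 2 (hH.ne_zero_of_mem hx)
    · exact neg_ne_zero.mp (hxz ▸ pow_ne_zero 2 (hH.ne_zero_of_mem hx))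
  · rw [card_union_of_disjoint hdisj, card_neg, card_image_of_injOn hH.injOn_sq,
      ← hH.union_neg, card_union_of_disjoint hH.disjoint_neg, card_neg]

theorem prod_erase_zero_eq_prod_sq_mul_neg_sq {M : Type*} [CommMonoid M] (hH : IsHalfSystem H)
    (hF : ¬IsSquare (-1 : F)) (f : F → M) :
    ∏ x ∈ univ.erase 0, f x = ∏ x ∈ H, f (x ^ 2) * f (-x ^ 2) := by
  rw [(hH.image_sq hF).prod_erase_zero_eq_prod_mul_neg, prod_image hH.injOn_sq]

theorem sum_sq (hH : IsHalfSystem H) (h2 : (2 : F) ≠ 0) (hF : 3 < Fintype.card F) :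
    ∑ x ∈ H, x ^ 2 = 0 := by
  have hsum : ∑ x ∈ univ.erase (0 : F), x ^ 2 = 0 := by
    rw [sum_erase _ (zero_pow two_ne_zero), FiniteField.sum_pow_lt_card_sub_one F 2 (by omega)]
  rw [← hH.union_neg, sum_union hH.disjoint_neg, sum_neg_index] at hsum
  simp only [neg_sq, ← two_mul] at hsum
  exact (mul_eq_zero.mp hsum).resolve_left h2

end Field

end IsHalfSystem

theorem exists_isHalfSystem {F : Type*} [Field F] [Fintype F] [DecidableEq F]
    (hF : ¬IsSquare (-1 : F)) : ∃ H : Finset F, IsHalfSystem H := by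
  classical
  refine ⟨({x | x ≠ 0 ∧ IsSquare x} : Finset F), disjoint_left.mpr ?_, ?_⟩
  · simp only [mem_neg', mem_filter_univ]
    rintro x ⟨hx, hsq⟩ ⟨-, hnsq⟩
    exact hF (neg_div_self hx ▸ hnsq.div hsq)
  · ext x
    simp only [mem_union, mem_neg', mem_filter_univ, mem_erase, mem_univ, and_true, neg_ne_zero]
    refine ⟨by rintro (⟨hx, -⟩ | ⟨hx, -⟩) <;> exact hx, fun hx => ?_⟩
    by_cases hsq : IsSquare x
    · exact .inl ⟨hx, hsq⟩
    refine .inr ⟨hx, (quadraticChar_one_iff_isSquare (neg_ne_zero.mpr hx)).mp ?_⟩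
    rw [neg_eq_neg_one_mul, map_mul, quadraticChar_neg_one_iff_not_isSquare.mpr hF,
      quadraticChar_neg_one_iff_not_isSquare.mpr hsq]
    rfl

namespace AddChar

theorem map_sum_eq_prod {G R ι : Type*} [AddCommMonoid G] [CommMonoid R]
    (ψ : AddChar G R) (s : Finset ι) (u : ι → G) : ψ (∑ i ∈ s, u i) = ∏ i ∈ s, ψ (u i) := by
  induction s using Finset.cons_induction with
  | empty => simp
  | cons a s ha ih => rw [sum_cons, prod_cons, map_add_eq_mul, ih]

section AddCommGroup

variable {G R : Type*} [AddCommGroup G] [CommRing R] (ψ : AddChar G R)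

theorem one_sub_map_neg (x : G) : 1 - ψ (-x) = -ψ (-x) * (1 - ψ x) := by
  have h : ψ (-x) * ψ x = 1 := by rw [← map_add_eq_mul, neg_add_cancel, map_zero_eq_one]
  linear_combination -h

theorem prod_one_sub_mul_one_sub_neg {ι : Type*} (s : Finset ι) (u : ι → G) :
    ∏ i ∈ s, (1 - ψ (u i)) * (1 - ψ (-u i)) =
      (-1) ^ #s * ψ (-∑ i ∈ s, u i) * (∏ i ∈ s, (1 - ψ (u i))) ^ 2 := by
  rw [← sum_neg_distrib, ψ.map_sum_eq_prod, ← prod_pow, ← prod_const, ← prod_mul_distrib,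
    ← prod_mul_distrib]
  refine prod_congr rfl fun i _ => ?_
  rw [ψ.one_sub_map_neg]
  ring

end AddCommGroup

theorem prod_erase_zero_one_sub_map_sq {F R : Type*} [Field F] [Fintype F] [DecidableEq F]
    [CommRing R] (ψ : AddChar F R) (hF : Fintype.card F % 4 = 3) (hF3 : 3 < Fintype.card F) :
    ∏ x ∈ univ.erase 0, (1 - ψ (x ^ 2)) = -∏ x ∈ univ.erase 0, (1 - ψ x) := by
  have hneg : ¬IsSquare (-1 : F) := by rwa [FiniteField.isSquare_neg_one_iff, not_not]
  have h2 : (2 : F) ≠ 0 := Ring.two_ne_zero fun h => hneg (FiniteField.isSquare_of_char_two h _)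
  obtain ⟨H, hH⟩ := exists_isHalfSystem hneg
  have hodd : Odd #H := ⟨(Fintype.card F - 3) / 4, by have := hH.two_mul_card; omega⟩
  rw [hH.prod_erase_zero_eq_prod_mul_neg, hH.prod_erase_zero_eq_prod_sq_mul_neg_sq hneg,
    ψ.prod_one_sub_mul_one_sub_neg, hH.sum_sq h2 hF3, neg_zero, map_zero_eq_one,
    hodd.neg_one_pow]
  simp only [neg_sq, ← sq, prod_pow]
  ring

end AddChar

theorem ZMod.prod_Icc_natCast_eq_prod_erase_zero {n : ℕ} [NeZero n] {M : Type*} [CommMonoid M]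
    (f : ZMod n → M) :
    ∏ j ∈ Icc 1 (n - 1), f j = ∏ x ∈ univ.erase 0, f x := by
  have hval {j : ℕ} (hj : j ∈ Icc 1 (n - 1)) : (j : ZMod n).val = j :=
    ZMod.val_cast_of_lt (by grind [NeZero.pos n])
  refine prod_nbij' Nat.cast ZMod.val (fun j hj => ?_) (fun x hx => ?_) (fun j hj => hval hj)
    (fun x _ => ZMod.natCast_zmod_val x) fun _ _ => rfl
  · simp only [mem_erase, mem_univ, and_true]
    grind [ZMod.val_zero]
  · simp only [mem_erase, mem_univ, and_true, mem_Icc] at hx ⊢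
    have := ZMod.val_lt x
    grind [ZMod.val_eq_zero]

/-- Let `p > 3` be a prime with `p ≡ 3 (mod 4)` and `ζ = e^(2πi/p)`. Then
`∏_{j=1}^{p-1} (1 - ζ^(j²))/(1 - ζ^j) = -1`. -/
theorem root_of_unity_product_three_mod_four (p : ℕ) (hp : p.Prime) (hp3 : 3 < p)
    (hpmod : p % 4 = 3) (ζ : ℂ) (hζ : ζ = Complex.exp (2 * Real.pi * Complex.I / p)) :
    ∏ j ∈ Finset.Icc 1 (p - 1), (1 - ζ ^ (j ^ 2)) / (1 - ζ ^ j) = -1 := by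
  have : Fact p.Prime := ⟨hp⟩
  have hζpow (n : ℕ) : ζ ^ n = ZMod.stdAddChar (n : ZMod p) := by
    have h := ZMod.stdAddChar_coe (N := p) n
    push_cast at h
    rw [h, hζ, ← Complex.exp_nat_mul]
    ring_nf
  have hprim : IsPrimitiveRoot ζ p := hζ ▸ Complex.isPrimitiveRoot_exp p hp.ne_zero
  have hden : ∏ j ∈ Icc 1 (p - 1), (1 - ζ ^ j) ≠ 0 := prod_ne_zero_iff.mpr fun j hj =>
    sub_ne_zero.mpr (hprim.pow_ne_one_of_pos_of_lt (by grind) (by grind)).symm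
  have hnum : ∏ j ∈ Icc 1 (p - 1), (1 - ζ ^ (j ^ 2)) = -∏ j ∈ Icc 1 (p - 1), (1 - ζ ^ j) := by
    simp only [hζpow, Nat.cast_pow]
    rw [ZMod.prod_Icc_natCast_eq_prod_erase_zero (fun x => 1 - ZMod.stdAddChar (x ^ 2)),
      ZMod.prod_Icc_natCast_eq_prod_erase_zero (fun x => 1 - ZMod.stdAddChar x)]
    exact (ZMod.stdAddChar (N := p)).prod_erase_zero_one_sub_map_sq (by rwa [ZMod.card])
      (by rwa [ZMod.card])
  rw [prod_div_distrib, hnum, neg_div, div_self hden]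
end

section
/- Let p be a prime with p ≡ 1 (mod 4) and ζ = e^{2πi/p}. Then ∏_{j=1}^{(p-1)/2} (1 - ζ^{16j}) = ζ^{-1} · √p. -/
open Finset Complex

lemma aux_one_sub_exp (θ : ℝ) :
    1 - Complex.exp (θ * Complex.I) =
      (-2 * Real.sin (θ / 2) : ℝ) * Complex.exp ((θ / 2 : ℝ) * Complex.I) * Complex.I := by
  have h2 : (θ : ℂ) = 2 * ((θ / 2 : ℝ) : ℂ) := by push_cast; ring
  rw [Complex.exp_mul_I, Complex.exp_mul_I, h2, Complex.cos_two_mul, Complex.sin_two_mul]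
  push_cast [Complex.ofReal_sin]
  have hsc := Complex.sin_sq_add_cos_sq ((θ:ℂ)/2)
  linear_combination (2 * Complex.sin ((θ:ℂ)/2)^2) * Complex.I_sq - 2 * hsc

/-- Let `p ≡ 1 (mod 4)` be prime and `ζ = e^(2πi/p)`. Then
`∏_{j=1}^{(p-1)/2} (1 - ζ^(16j)) = ζ⁻¹·√p`. -/
theorem half_product_sixteen (p : ℕ) (hp : p.Prime) (hpmod : p % 4 = 1)
    (ζ : ℂ) (hζ : ζ = Complex.exp (2 * Real.pi * Complex.I / p)) :
    ∏ j ∈ Finset.Icc 1 ((p - 1) / 2), (1 - ζ ^ (16 * j)) = ζ⁻¹ * Real.sqrt p := by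
  have hp5 : 5 ≤ p := by have := hp.two_le; omega
  set k : ℕ := p / 4 with hk
  have hpk : p = 4 * k + 1 := by omega
  set m : ℕ := (p - 1) / 2 with hm
  have hmk : m = 2 * k := by omega
  have hppos : (0:ℝ) < p := by positivity
  have hpne : (p:ℂ) ≠ 0 := by exact_mod_cast hp.ne_zero
  have hprim : IsPrimitiveRoot ζ p := hζ ▸ Complex.isPrimitiveRoot_exp p hp.ne_zero
  -- r and q
  set r : ℕ → ℕ := fun j => 16 * j % p with hr
  set q : ℕ → ℕ := fun j => 16 * j / p with hq
  set w : ℕ → ℕ := fun j => if r j ≤ m then r j else p - r j with hw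
  have hndvd : ∀ j ∈ Icc 1 m, ¬ p ∣ 16 * j := by
    intro j hj hdvd
    simp only [mem_Icc] at hj
    rcases (Nat.Prime.dvd_mul hp).mp hdvd with h | h
    · have : p ∣ 2 := hp.dvd_of_dvd_pow (n := 4) (by norm_num [h])
      have := Nat.le_of_dvd (by norm_num) this
      omega
    · have := Nat.le_of_dvd (by omega) h
      omega
  have hrange : ∀ j ∈ Icc 1 m, 1 ≤ r j ∧ r j ≤ p - 1 := by
    intro j hj
    have h1 : r j < p := Nat.mod_lt _ (by omega)
    have h2 : r j ≠ 0 := by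
      intro h0
      exact hndvd j hj (Nat.dvd_of_mod_eq_zero h0)
    omega
  have hwrange : ∀ j ∈ Icc 1 m, w j ∈ Icc 1 m := by
    intro j hj
    obtain ⟨h1, h2⟩ := hrange j hj
    simp only [hw, mem_Icc]
    split <;> omega
  haveI : Fact p.Prime := ⟨hp⟩
  have hnd16 : ¬ p ∣ 16 := by
    intro h
    have : p ∣ 2 := hp.dvd_of_dvd_pow (n := 4) (by norm_num [h])
    have := Nat.le_of_dvd (by norm_num) this
    omega
  have h16 : (16 : ZMod p) ≠ 0 := by
    intro h
    rw [show (16 : ZMod p) = ((16 : ℕ) : ZMod p) by push_cast; rfl] at h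
    exact hnd16 ((ZMod.natCast_eq_zero_iff 16 p).mp h)
  have hrcast : ∀ j : ℕ, ((r j : ZMod p)) = 16 * (j : ZMod p) := by
    intro j
    simp only [hr]
    rw [ZMod.natCast_mod]
    push_cast
    ring
  have hinj : Set.InjOn w (Icc 1 m) := by
    intro a ha b hb hab
    simp only [coe_Icc, Set.mem_Icc] at ha hb
    have hra : r a < p := Nat.mod_lt _ (by omega)
    have hrb : r b < p := Nat.mod_lt _ (by omega)
    have key : ∀ x y : ℕ, 1 ≤ x → x ≤ m → 1 ≤ y → y ≤ m → r x = r y → x = y := by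
      intro x y hx1 hx2 hy1 hy2 hxy
      have : ((x : ZMod p)) = (y : ZMod p) := by
        have hh := hrcast x
        rw [hxy, hrcast y] at hh
        exact (mul_left_cancel₀ h16 hh).symm
      have := (ZMod.natCast_eq_natCast_iff' x y p).mp this
      rw [Nat.mod_eq_of_lt (by omega), Nat.mod_eq_of_lt (by omega)] at this
      exact this
    have key2 : ∀ x y : ℕ, 1 ≤ x → x ≤ m → 1 ≤ y → y ≤ m → r x + r y = p → False := by
      intro x y hx1 hx2 hy1 hy2 hxy
      have h0 : ((r x + r y : ℕ) : ZMod p) = 0 := by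
        rw [hxy]; exact ZMod.natCast_self p
      push_cast [hrcast] at h0
      have : ((x : ZMod p)) + y = 0 := by
        have := mul_left_cancel₀ h16 (show (16 : ZMod p) * ((x : ZMod p) + y) = 16 * 0 by
          rw [mul_zero]; linear_combination h0)
        exact this
      have : ((x + y : ℕ) : ZMod p) = 0 := by push_cast; exact this
      have := (ZMod.natCast_eq_zero_iff _ p).mp this
      have := Nat.le_of_dvd (by omega) this
      omega
    simp only [hw] at hab
    split_ifs at hab with h1 h2 h2
    · exact key a b ha.1 ha.2 hb.1 hb.2 hab
    · exact absurd (key2 a b ha.1 ha.2 hb.1 hb.2 (by omega)) not_false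
    · exact absurd (key2 a b ha.1 ha.2 hb.1 hb.2 (by omega)) not_false
    · exact key a b ha.1 ha.2 hb.1 hb.2 (by omega)
  have himage : Finset.image w (Icc 1 m) = Icc 1 m := by
    apply Finset.eq_of_subset_of_card_le
    · intro t ht
      simp only [Finset.mem_image] at ht
      obtain ⟨j, hj, rfl⟩ := ht
      exact hwrange j hj
    · rw [Finset.card_image_of_injOn hinj]
  -- power formula
  have hpow : ∀ n : ℕ, ζ ^ n = Complex.exp ((2 * Real.pi * n / p : ℝ) * Complex.I) := by
    intro n
    rw [hζ, ← Complex.exp_nat_mul]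
    congr 1
    push_cast
    field_simp
  -- full product
  have hfull : ∏ t ∈ Icc 1 (p - 1), (1 - ζ ^ t) = (p : ℂ) := by
    obtain ⟨n, hn⟩ : ∃ n, p = n + 1 := ⟨p - 1, by omega⟩
    have hμ : IsPrimitiveRoot ζ (n + 1) := hn ▸ hprim
    have hpr := hμ.prod_one_sub_pow_eq_order
    have : ∏ t ∈ Icc 1 (p - 1), (1 - ζ ^ t) = ∏ i ∈ range n, (1 - ζ ^ (i + 1)) := by
      rw [show p - 1 = n by omega, ← Finset.Ico_add_one_right_eq_Icc, Finset.prod_Ico_eq_prod_range]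
      simp [add_comm]
    rw [this, hpr, hn]
    push_cast
    ring
  -- abs of factors
  have habs : ∀ t ∈ Icc 1 (p - 1), ‖1 - ζ ^ t‖ = 2 * Real.sin (Real.pi * t / p) := by
    intro t ht
    simp only [mem_Icc] at ht
    rw [hpow t, aux_one_sub_exp (2 * Real.pi * t / p)]
    rw [show (2 * Real.pi * t / p) / 2 = Real.pi * t / p by ring]
    rw [norm_mul, norm_mul, Complex.norm_real, Real.norm_eq_abs, Complex.norm_exp_ofReal_mul_I, Complex.norm_I]
    have hsn : 0 ≤ Real.sin (Real.pi * t / p) := by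
      apply Real.sin_nonneg_of_nonneg_of_le_pi
      · positivity
      · rw [div_le_iff₀ hppos]
        have : (t : ℝ) ≤ p := by exact_mod_cast Nat.le_of_lt (by omega)
        nlinarith [Real.pi_pos]
    rw [abs_of_nonpos (by nlinarith)]
    ring
  -- half sine product
  have hhalf : ∏ t ∈ Icc 1 m, (2 * Real.sin (Real.pi * t / p)) = Real.sqrt p := by
    set g : ℕ → ℝ := fun t => 2 * Real.sin (Real.pi * t / p) with hg
    have hgpos : ∀ t ∈ Icc 1 m, 0 < g t := by
      intro t ht
      simp only [mem_Icc] at ht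
      have h1 : 0 < Real.pi * t / p := by
        have : (0:ℝ) < t := by exact_mod_cast ht.1
        positivity
      have h2 : Real.pi * t / p < Real.pi := by
        rw [div_lt_iff₀ hppos]
        have : (t : ℝ) < p := by exact_mod_cast (by omega : t < p)
        nlinarith [Real.pi_pos]
      have := Real.sin_pos_of_pos_of_lt_pi h1 h2
      simp only [hg]
      linarith
    have hApos : 0 < ∏ t ∈ Icc 1 m, g t := Finset.prod_pos hgpos
    have hsq : (∏ t ∈ Icc 1 m, g t) ^ 2 = p := by
      have hsplit : (∏ t ∈ Ioc 0 m, g t) * ∏ t ∈ Ioc m (2 * m), g t = ∏ t ∈ Ioc 0 (2 * m), g t :=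
        Finset.prod_Ioc_consecutive g (by omega) (by omega)
      have hsecond : ∏ t ∈ Ioc m (2 * m), g t = ∏ t ∈ Ioc 0 m, g t := by
        apply Finset.prod_nbij' (fun t => p - t) (fun t => p - t)
        · intro t ht; simp only [mem_Ioc] at *; omega
        · intro t ht; simp only [mem_Ioc] at *; omega
        · intro t ht; simp only [mem_Ioc] at ht; omega
        · intro t ht; simp only [mem_Ioc] at ht; omega
        · intro t ht
          simp only [mem_Ioc] at ht
          simp only [hg]
          congr 1
          rw [← Real.sin_pi_sub]
          congr 1
          rw [Nat.cast_sub (by omega : t ≤ p)]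
          field_simp
      have habs2 : ∏ t ∈ Icc 1 (p - 1), ‖1 - ζ ^ t‖ = (p : ℝ) := by
        rw [← norm_prod, hfull, Complex.norm_natCast]
      have : ∏ t ∈ Icc 1 (p - 1), g t = (p : ℝ) := by
        rw [← habs2]
        exact Finset.prod_congr rfl fun t ht => (habs t ht).symm
      rw [show Icc 1 (p-1) = Ioc 0 (2 * m) by rw [show p - 1 = 2 * m by omega]; rfl] at this
      rw [show Icc 1 m = Ioc 0 m from rfl, sq]
      calc (∏ t ∈ Ioc 0 m, g t) * ∏ t ∈ Ioc 0 m, g t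
          = (∏ t ∈ Ioc 0 m, g t) * ∏ t ∈ Ioc m (2*m), g t := by rw [hsecond]
        _ = ∏ t ∈ Ioc 0 (2*m), g t := hsplit
        _ = p := this
    calc ∏ t ∈ Icc 1 m, g t = Real.sqrt ((∏ t ∈ Icc 1 m, g t) ^ 2) :=
          (Real.sqrt_sq hApos.le).symm
      _ = Real.sqrt p := by rw [hsq]
  -- factor formula
  have hfac : ∀ j ∈ Icc 1 m, (1 - ζ ^ (16 * j)) =
      ((-2 : ℂ) * Complex.I * (Real.sin (16 * Real.pi * j / p) : ℝ)) *
        Complex.exp ((16 * Real.pi * j / p : ℝ) * Complex.I) := by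
    intro j hj
    rw [hpow (16 * j), aux_one_sub_exp (2 * Real.pi * ((16 * j : ℕ) : ℝ) / p)]
    rw [show (2 * Real.pi * ((16 * j : ℕ) : ℝ) / p) / 2 = 16 * Real.pi * j / p by push_cast; ring]
    push_cast
    ring
  -- exp sum
  have hS : (∑ j ∈ Icc 1 m, j) * 8 = p ^ 2 - 1 := by
    have : ∀ n : ℕ, (∑ j ∈ Icc 1 n, j) * 2 = n * (n + 1) := by
      intro n
      induction n with
      | zero => simp
      | succ i ih =>
        rw [Finset.sum_Icc_succ_top (by omega)]
        ring_nf
        ring_nf at ih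
        omega
    have h2 := this m
    have hpm : p = 2 * m + 1 := by omega
    have key : (∑ j ∈ Icc 1 m, j) * 8 + 1 = p ^ 2 := by
      rw [hpm]
      zify at h2 ⊢
      linear_combination 4 * h2
    omega
  have hexp : ∏ j ∈ Icc 1 m, Complex.exp ((16 * Real.pi * j / p : ℝ) * Complex.I) = ζ⁻¹ := by
    rw [← Complex.exp_sum]
    have hsum : ∑ j ∈ Icc 1 m, ((16 * Real.pi * j / p : ℝ) : ℂ) * Complex.I
        = ((p : ℂ)) * (2 * Real.pi * Complex.I) + (-(2 * Real.pi * Complex.I / p)) := by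
      have hcast : ∑ j ∈ Icc 1 m, ((16 * Real.pi * j / p : ℝ) : ℂ) * Complex.I
          = (16 * Real.pi / p : ℂ) * (∑ j ∈ Icc 1 m, (j : ℂ)) * Complex.I := by
        rw [Finset.mul_sum, Finset.sum_mul]
        apply Finset.sum_congr rfl
        intro j hj
        push_cast
        ring
      rw [hcast]
      have hSc : (∑ j ∈ Icc 1 m, (j : ℂ)) * 8 = (p : ℂ) ^ 2 - 1 := by
        have := hS
        have h8 : ((∑ j ∈ Icc 1 m, j) * 8 : ℕ) = ((p ^ 2 - 1 : ℕ) : ℕ) := this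
        have : (((∑ j ∈ Icc 1 m, j) * 8 : ℕ) : ℂ) = (((p ^ 2 - 1 : ℕ)) : ℂ) := by
          exact_mod_cast congrArg (Nat.cast (R := ℂ)) h8
        push_cast [Nat.cast_sub (by nlinarith : 1 ≤ p ^ 2)] at this
        simpa using this
      field_simp
      linear_combination 2 * hSc
    rw [hsum, Complex.exp_add, hζ, ← Complex.exp_neg]
    rw [show ((p:ℂ)) * (2 * Real.pi * Complex.I) = (p : ℕ) * (2 * Real.pi * Complex.I) by norm_num]
    rw [Complex.exp_nat_mul_two_pi_mul_I, one_mul]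
  -- sine decomposition
  have hsin : ∀ j ∈ Icc 1 m, Real.sin (16 * Real.pi * j / p)
      = (-1 : ℝ) ^ (q j) * Real.sin (Real.pi * w j / p) := by
    intro j hj
    obtain ⟨hr1, hr2⟩ := hrange j hj
    have hdm : p * q j + r j = 16 * j := Nat.div_add_mod (16 * j) p
    have h16j : (16 * (j:ℝ)) = p * q j + r j := by exact_mod_cast (congrArg (Nat.cast (R := ℝ)) hdm).symm
    have harg : 16 * Real.pi * j / p = Real.pi * (r j) / p + (q j) * Real.pi := by
      field_simp
      linear_combination h16j
    rw [harg, Real.sin_add_nat_mul_pi]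
    congr 1
    by_cases h : r j ≤ m
    · simp only [hw, if_pos h]
    · simp only [hw, if_neg h]
      rw [show Real.pi * ((p - r j : ℕ) : ℝ) / p = Real.pi - Real.pi * (r j) / p by
        rw [Nat.cast_sub (by omega : r j ≤ p)]; field_simp]
      rw [Real.sin_pi_sub]
  -- Gauss lemma: number of flips is even
  have hneven : Even (#{j ∈ Icc 1 m | m < r j}) := by
    have h16' : (((16 : ℤ) : ZMod p)) ≠ 0 := by push_cast; exact h16
    have h4' : (((4 : ℤ) : ZMod p)) ≠ 0 := by
      intro h
      apply h16'
      push_cast at h ⊢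
      rw [show (16 : ZMod p) = 4 * 4 by norm_num, h, mul_zero]
    have hleg : legendreSym p 16 = 1 := by
      have hm16 : legendreSym p 16 = legendreSym p 4 * legendreSym p 4 := by
        rw [← legendreSym.mul]; norm_num
      have hsq : legendreSym p 4 * legendreSym p 4 = 1 := by
        have := legendreSym.sq_one p (a := 4) h4'
        rwa [sq] at this
      rw [hm16, hsq]
    have hgauss := ZMod.gauss_lemma (p := p) (a := 16) (by omega) h16'
    rw [hleg] at hgauss
    have hseteq : {x ∈ Ico 1 (p / 2).succ | p / 2 < ((16 : ℤ) * (x : ℕ) : ZMod p).val}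
        = {j ∈ Icc 1 m | m < r j} := by
      have hIco : Ico 1 (p / 2).succ = Icc 1 m := by
        rw [Nat.succ_eq_add_one, Finset.Ico_add_one_right_eq_Icc]
        congr 1
        omega
      rw [hIco]
      apply Finset.filter_congr
      intro x hx
      have hv : (((16 : ℤ) * (x : ℕ) : ZMod p)).val = r x := by
        have : ((16 : ℤ) * (x : ℕ) : ZMod p) = ((16 * x : ℕ) : ZMod p) := by push_cast; ring
        rw [this, ZMod.val_natCast]
      rw [hv, show p / 2 = m by omega]
    rw [hseteq] at hgauss
    rcases Nat.even_or_odd (#{j ∈ Icc 1 m | m < r j}) with h | h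
    · exact h
    · exfalso
      rw [Odd.neg_one_pow h] at hgauss
      norm_num at hgauss
  -- parity of sum of q
  have hQ : (-1 : ℝ) ^ (∑ j ∈ Icc 1 m, q j) = (-1) ^ k := by
    set S : ℕ := ∑ j ∈ Icc 1 m, j with hSdef
    set Q : ℕ := ∑ j ∈ Icc 1 m, q j with hQdef
    set R : ℕ := ∑ j ∈ Icc 1 m, r j with hRdef
    set n : ℕ := #{j ∈ Icc 1 m | m < r j} with hndef
    set T : ℕ := ∑ j ∈ Icc 1 m, (if m < r j then w j else 0) with hTdef
    have h1 : 16 * S = p * Q + R := by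
      have h0 : ∑ j ∈ Icc 1 m, 16 * j = ∑ j ∈ Icc 1 m, (p * q j + r j) :=
        Finset.sum_congr rfl fun j _ => (Nat.div_add_mod (16 * j) p).symm
      rw [Finset.sum_add_distrib, ← Finset.mul_sum, ← Finset.mul_sum] at h0
      exact h0
    have hWS : ∑ j ∈ Icc 1 m, w j = S := by
      have h1 := Finset.sum_image (f := fun t : ℕ => t) (g := w) (s := Icc 1 m)
        (fun x hx y hy hxy => hinj hx hy hxy)
      rw [himage] at h1
      exact h1.symm
    have h2 : R + 2 * T = S + n * p := by
      have hper : ∀ j ∈ Icc 1 m, r j + 2 * (if m < r j then w j else 0)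
          = w j + (if m < r j then p else 0) := by
        intro j hj
        obtain ⟨hr1, hr2⟩ := hrange j hj
        simp only [hw]
        split_ifs <;> omega
      have hsum := Finset.sum_congr rfl hper
      rw [Finset.sum_add_distrib, Finset.sum_add_distrib, ← Finset.mul_sum] at hsum
      have hifp : ∑ j ∈ Icc 1 m, (if m < r j then p else 0) = n * p := by
        rw [← Finset.sum_filter, Finset.sum_const, smul_eq_mul]
      rw [hifp, hWS] at hsum
      exact hsum
    obtain ⟨n', hn'⟩ := hneven
    obtain ⟨u, hu⟩ : ∃ u, p * Q = 2 * u + Q :=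
      ⟨m * Q, by rw [show p = 2 * m + 1 by omega]; ring⟩
    obtain ⟨v, hv⟩ : ∃ v, n * p = 2 * v := ⟨n' * p, by rw [show n = n' + n' from hn']; ring⟩
    obtain ⟨K, hK⟩ : ∃ K, S * 8 = 16 * K + 8 * k := by
      refine ⟨k * k, ?_⟩
      have hps : p ^ 2 - 1 = 16 * (k * k) + 8 * k := by
        have : p ^ 2 = 16 * (k * k) + 8 * k + 1 := by rw [hpk]; ring
        rw [this, Nat.add_sub_cancel]
      rw [hS, hps]
    rw [hu] at h1
    rw [hv] at h2
    have hpar : Q % 2 = k % 2 := by omega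
    rw [neg_one_pow_eq_pow_mod_two, hpar, ← neg_one_pow_eq_pow_mod_two]
  have hprodw : ∏ j ∈ Icc 1 m, (2 * Real.sin (Real.pi * w j / p)) = Real.sqrt p := by
    have h0 := Finset.prod_image (s := Icc 1 m) (g := w)
      (f := fun t : ℕ => 2 * Real.sin (Real.pi * t / p))
      (fun x hx y hy hxy => hinj hx hy hxy)
    rw [himage] at h0
    rw [← h0, hhalf]
  have hreal : (-4 : ℝ) ^ k * ∏ j ∈ Icc 1 m, Real.sin (16 * Real.pi * j / p) = Real.sqrt p := by
    rw [Finset.prod_congr rfl hsin, Finset.prod_mul_distrib,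
      Finset.prod_pow_eq_pow_sum, hQ]
    have h4k : (-4 : ℝ) ^ k * (-1 : ℝ) ^ k = 2 ^ m := by
      rw [← mul_pow, hmk, pow_mul]
      norm_num
    calc (-4 : ℝ) ^ k * ((-1 : ℝ) ^ k * ∏ j ∈ Icc 1 m, Real.sin (Real.pi * w j / p))
        = ((-4 : ℝ) ^ k * (-1 : ℝ) ^ k) * ∏ j ∈ Icc 1 m, Real.sin (Real.pi * w j / p) := by
          ring
      _ = 2 ^ m * ∏ j ∈ Icc 1 m, Real.sin (Real.pi * w j / p) := by rw [h4k]
      _ = ∏ j ∈ Icc 1 m, (2 * Real.sin (Real.pi * w j / p)) := by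
          rw [Finset.prod_mul_distrib, Finset.prod_const, Nat.card_Icc, Nat.add_sub_cancel]
      _ = Real.sqrt p := hprodw
  -- assemble
  rw [Finset.prod_congr rfl hfac, Finset.prod_mul_distrib, hexp, Finset.prod_mul_distrib,
    Finset.prod_const, Nat.card_Icc]
  have hc : ((-2 : ℂ) * Complex.I) ^ (m + 1 - 1) = (((-4 : ℝ) ^ k : ℝ) : ℂ) := by
    rw [show m + 1 - 1 = m by omega, hmk, pow_mul]
    push_cast
    congr 1
    rw [mul_pow]
    rw [Complex.I_sq]
    norm_num
  rw [hc, ← Complex.ofReal_prod, ← Complex.ofReal_mul, hreal]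
  ring
end
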